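/- arXiv:1809.05121 — 4 statements merged into one kernel-verified Lean document; each statement's English description precedes it below -/
import Mathlib

section
/- Let A be a ring, P an arbitrary cochain complex of right A-modules, and Q a bounded cochain complex of projective right A-modules such that Q^i = 0 for all i ≤ q. Then every morphism Q → P in the derived category D(Mod A) factors through the canonical inclusion σ_{>q}P → P of the stupid truncation. -/
/-! The inclusion `ι` is a monomorphism whose cokernel is concentrated in degrees `≤ q`, so it
gives a distinguished triangle `T → P → coker ι → T[1]` in the derived category. A bounded above
complex of projectives is K-projective, hence morphisms out of `Qc` in the derived category are
represented by chain maps; and a chain map from `Qc` (concentrated in degrees `> q`) to `coker ι`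
vanishes. So `f` becomes zero in `coker ι` and lifts along `ι`. -/

open CategoryTheory Limits

universe w v u

namespace CochainComplex

variable {C : Type u} [Category.{v} C] [Abelian C]

lemma hom_eq_zero_of_isStrictlyGE_of_isStrictlyLE {K L : CochainComplex C ℤ} (n : ℤ)
    [K.IsStrictlyGE (n + 1)] [L.IsStrictlyLE n] (f : K ⟶ L) : f = 0 := by
  ext i
  by_cases hi : i ≤ n
  · exact (K.isZero_of_isStrictlyGE (n + 1) i).eq_of_src _ _
  · exact (L.isZero_of_isStrictlyLE n i).eq_of_tgt _ _

lemma mono_of_isIso_f_of_isStrictlyGE {T P : CochainComplex C ℤ} (ι : T ⟶ P) (n : ℤ)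
    [T.IsStrictlyGE (n + 1)] (hι : ∀ i, n < i → IsIso (ι.f i)) : Mono ι := by
  refine HomologicalComplex.mono_of_mono_f _ fun i => ?_
  by_cases hi : n < i
  · have := hι i hi
    infer_instance
  · exact (T.isZero_of_isStrictlyGE (n + 1) i).mono _

lemma isStrictlyLE_cokernel_of_isIso_f {T P : CochainComplex C ℤ} (ι : T ⟶ P) (n : ℤ)
    (hι : ∀ i, n < i → IsIso (ι.f i)) : (cokernel ι).IsStrictlyLE n := by
  refine ((cokernel ι).isStrictlyLE_iff n).2 fun i hi => ?_
  have := hι i hi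
  exact (isZero_zero _).of_iso
    (PreservesCokernel.iso (HomologicalComplex.eval _ _ i) ι ≪≫ cokernel.ofEpi (ι.f i))

end CochainComplex

namespace DerivedCategory

variable {C : Type u} [Category.{v} C] [Abelian C] [HasDerivedCategory.{w} C]

lemma Q_map_surjective_of_isKProjective (K L : CochainComplex C ℤ) [K.IsKProjective] :
    Function.Surjective (Q.map : (K ⟶ L) → (Q.obj K ⟶ Q.obj L)) := by
  intro φ
  obtain ⟨ψ, hψ⟩ := (CochainComplex.IsKProjective.Qh_map_bijective K
    ((HomotopyCategory.quotient _ _).obj L)).surjective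
      ((quotientCompQhIso C).hom.app K ≫ φ ≫ (quotientCompQhIso C).inv.app L)
  obtain ⟨g, rfl⟩ := (HomotopyCategory.quotient _ _).map_surjective ψ
  refine ⟨g, ?_⟩
  rw [← cancel_epi ((quotientCompQhIso C).hom.app K), ← quotientCompQhIso_hom_naturality]
  simp [hψ]

lemma exists_lift_of_shortExact_of_isKProjective {S : ShortComplex (CochainComplex C ℤ)}
    (hS : S.ShortExact) (K : CochainComplex C ℤ) [K.IsKProjective]
    (hK : ∀ g : K ⟶ S.X₃, g = 0) (f : Q.obj K ⟶ Q.obj S.X₂) :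
    ∃ g : Q.obj K ⟶ Q.obj S.X₁, f = g ≫ Q.map S.f := by
  obtain ⟨g, hg⟩ := Q_map_surjective_of_isKProjective K S.X₃ (f ≫ Q.map S.g)
  exact Pretriangulated.Triangle.coyoneda_exact₂ _ (triangleOfSES_distinguished hS) f
    (by change f ≫ Q.map S.g = 0; rw [← hg, hK g, Q.map_zero])

end DerivedCategory

theorem morphism_from_bounded_projective_factors_through_stupid_truncation
    (A : Type u) [Ring A] [HasDerivedCategory (ModuleCat.{u} Aᵐᵒᵖ)]
    (P Qc : CochainComplex (ModuleCat.{u} Aᵐᵒᵖ) ℤ) (q : ℤ)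
    -- Qc is a bounded complex of projective modules:
    (hQ_bdd : ∃ a b : ℤ, ∀ i : ℤ, (i < a ∨ b < i) → IsZero (Qc.X i))
    (hQ_proj : ∀ i : ℤ, Module.Projective Aᵐᵒᵖ (Qc.X i))
    -- Qc vanishes in degrees ≤ q:
    (hQ_low : ∀ i : ℤ, i ≤ q → IsZero (Qc.X i))
    -- T, together with ι : T ⟶ P, is the stupid truncation σ_{>q}P with its canonical
    -- inclusion into P:
    (T : CochainComplex (ModuleCat.{u} Aᵐᵒᵖ) ℤ) (ι : T ⟶ P)
    (hT_low : ∀ i : ℤ, i ≤ q → IsZero (T.X i))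
    (hι : ∀ i : ℤ, q < i → IsIso (ι.f i))
    (f : DerivedCategory.Q.obj Qc ⟶ DerivedCategory.Q.obj P) :
    ∃ g : DerivedCategory.Q.obj Qc ⟶ DerivedCategory.Q.obj T,
      f = g ≫ DerivedCategory.Q.map ι := by
  obtain ⟨_, b, hQ_high⟩ := hQ_bdd
  have : ∀ i, Projective (Qc.X i) := fun i => (IsProjective.iff_projective _).1 (hQ_proj i)
  have : Qc.IsStrictlyLE b := (Qc.isStrictlyLE_iff b).2 fun i hi => hQ_high i (Or.inr hi)
  have : Qc.IsStrictlyGE (q + 1) := (Qc.isStrictlyGE_iff _).2 fun i hi => hQ_low i (by omega)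
  have : T.IsStrictlyGE (q + 1) := (T.isStrictlyGE_iff _).2 fun i hi => hT_low i (by omega)
  have : Qc.IsKProjective := Qc.isKProjective_of_projective b
  have : Mono ι := CochainComplex.mono_of_isIso_f_of_isStrictlyGE ι q hι
  have : (cokernel ι).IsStrictlyLE q := CochainComplex.isStrictlyLE_cokernel_of_isIso_f ι q hι
  have hS : (ShortComplex.mk ι (cokernel.π ι) (cokernel.condition ι)).ShortExact :=
    { exact := ShortComplex.exact_of_g_is_cokernel _ (cokernelIsCokernel ι) }
  exact DerivedCategory.exists_lift_of_shortExact_of_isKProjective hS Qc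
    (CochainComplex.hom_eq_zero_of_isStrictlyGE_of_isStrictlyLE q) f
end

section
/- Let T be a triangulated category admitting arbitrary small coproducts and let P be a class of compact objects of T. Define classes E_n of objects of T inductively: E_1 consists of all small coproducts of objects of P; for n ≥ 2, an object N lies in E_n if there exists a distinguished triangle N_0 → N → N_1 → ΣN_0 with N_0 ∈ E_a and N_1 ∈ E_b for some a, b ≥ 1 with a + b = n. Let X be a compact object of T, let f : X → Y' be any morphism, and let y : Y → Y' be a morphism whose cone lies in E_n for some n ≥ 1. Then there exist an object X' and morphisms x : X' → X and g : X' → Y such that f ∘ x = y ∘ g and the cone of x lies in the thick triangulated subcategory of T generated by P (the smallest strictly full triangulated subcategory containing P and closed under direct summands). -/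
/-! STATEMENT 6: Let T be a triangulated category with arbitrary small coproducts and P a
class of compact objects of T. Define E_1 as the class of small coproducts of objects of P,
and, for n ≥ 2, let N ∈ E_n if there is a distinguished triangle N₀ → N → N₁ → ΣN₀ with
N₀ ∈ E_a, N₁ ∈ E_b, a + b = n, a, b ≥ 1. If X is compact, f : X ⟶ Y' is any morphism and
y : Y ⟶ Y' has cone in E_n for some n ≥ 1, then there are x : X' ⟶ X and g : X' ⟶ Y with
f ∘ x = y ∘ g such that the cone of x lies in the thick triangulated subcategory
generated by P. -/

open CategoryTheory Limits Pretriangulated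

universe v u

variable {T : Type u} [Category.{v} T] [Preadditive T] [HasZeroObject T] [HasShift T ℤ]
  [∀ n : ℤ, (shiftFunctor T n).Additive] [Pretriangulated T] [IsTriangulated T]

/-- An object `X` of a (pre)triangulated category is compact if `Hom_T(X, −)` commutes with
arbitrary small coproducts. -/
def IsCompactObj (X : T) : Prop :=
  ∀ J : Type v, PreservesColimitsOfShape (Discrete J) (preadditiveCoyoneda.obj (Opposite.op X))

/-- The classes `E n` of objects of `T`: `E 1` consists of all small coproducts of objects
of `P`; for `a, b ≥ 1`, an object `N` lies in `E (a + b)` whenever there is a distinguished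
triangle `N₀ ⟶ N ⟶ N₁ ⟶ ΣN₀` with `N₀ ∈ E a` and `N₁ ∈ E b`. -/
inductive EClass (P : Set T) : ℕ → T → Prop
  | coprod {J : Type v} (Y : J → T) (hY : ∀ j, Y j ∈ P) [HasCoproduct Y] {N : T}
      (e : N ≅ ∐ Y) : EClass P 1 N
  | ext {a b : ℕ} (ha : 1 ≤ a) (hb : 1 ≤ b) {N₀ N N₁ : T} (f : N₀ ⟶ N) (g : N ⟶ N₁)
      (h : N₁ ⟶ N₀⟦(1 : ℤ)⟧) (hT : Triangle.mk f g h ∈ distTriang T)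
      (h₀ : EClass P a N₀) (h₁ : EClass P b N₁) : EClass P (a + b) N

/-- Membership in the smallest strictly full triangulated subcategory of `T` containing `P`
and closed under direct summands (the thick triangulated subcategory generated by `P`). -/
inductive ThickClosure (P : Set T) : T → Prop
  | of {X : T} (hX : X ∈ P) : ThickClosure P X
  | zero {X : T} (hX : IsZero X) : ThickClosure P X
  | isoClosed {X Y : T} (e : X ≅ Y) (hX : ThickClosure P X) : ThickClosure P Y
  | shift {X : T} (n : ℤ) (hX : ThickClosure P X) : ThickClosure P (X⟦n⟧)
  | ext₂ {X Y Z : T} (f : X ⟶ Y) (g : Y ⟶ Z) (h : Z ⟶ X⟦(1 : ℤ)⟧)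
      (hT : Triangle.mk f g h ∈ distTriang T) (hX : ThickClosure P X) (hZ : ThickClosure P Z) :
      ThickClosure P Y
  | summand {X Z Y : T} [HasBinaryBiproduct X Z] (e : Y ≅ X ⊞ Z) (hY : ThickClosure P Y) :
      ThickClosure P X

/-! Work with compactness in its elementwise form: `⨁ⱼ Hom(X, Yⱼ) → Hom(X, ∐ Y)` is bijective.
In this form it is stable under shifts and, by the five lemma applied to the long exact
`Hom(-, W)` sequences, under extensions.

If the cone of `y` is a coproduct `∐ Z` of objects of `P`, the composite `X → Y' → ∐ Z` has
only finitely many nonzero components `X → Zⱼ`; passing successively to the fibres of these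
components kills them, at the cost of a morphism `X' → X` whose cone is built from finitely many
`Zⱼ`. Then `X' → Y' → ∐ Z` vanishes, so `X' → Y'` lifts along `y`. If the cone of `y` is an
extension `N₀ → N → N₁`, the octahedral axiom factors `y` as `Y → Y'' → Y'` with cones `N₀`
and `N₁`, and liftings along the two factors compose, since by the octahedral axiom again the
cone of a composite is an extension of the two cones. -/

open DirectSum

theorem DirectSum.exact_map {ι : Type*} {α β γ : ι → Type*}
    [∀ i, AddCommMonoid (α i)] [∀ i, AddCommMonoid (β i)] [∀ i, AddCommMonoid (γ i)]
    {f : ∀ i, α i →+ β i} {g : ∀ i, β i →+ γ i} (hfg : ∀ i, Function.Exact (f i) (g i)) :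
    Function.Exact (map f) (map g) := by
  classical
  intro y
  constructor
  · intro hy
    rw [← sum_support_of y]
    refine AddSubmonoid.sum_mem (AddMonoidHom.mrange (map f)) fun i _ => ?_
    obtain ⟨x, hx⟩ := (hfg i (y i)).1 (by simpa using congr($hy i))
    exact ⟨of _ i x, by simp [hx]⟩
  · rintro ⟨x, rfl⟩
    ext i
    simp [(hfg i).apply_apply_eq_zero]

section Preadditive

variable {C : Type*} [Category C] [Preadditive C] {J : Type*} [DecidableEq J]

def homSumMap (X : C) {Y : J → C} {P : C} (ι : ∀ j, Y j ⟶ P) : (⨁ j, X ⟶ Y j) →+ (X ⟶ P) :=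
  toAddMonoid fun j => Preadditive.rightComp X (ι j)

@[simp]
theorem homSumMap_of (X : C) {Y : J → C} {P : C} (ι : ∀ j, Y j ⟶ P) (j : J) (a : X ⟶ Y j) :
    homSumMap X ι (of _ j a) = a ≫ ι j :=
  toAddMonoid_of _ _ _

theorem homSumMap_naturality {X X' : C} (a : X' ⟶ X) {Y : J → C} {P : C} (ι : ∀ j, Y j ⟶ P) :
    (Preadditive.leftComp P a).comp (homSumMap X ι) =
      (homSumMap X' ι).comp (DirectSum.map fun j => Preadditive.leftComp (Y j) a) := by
  refine DirectSum.addHom_ext fun j b => ?_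
  simp [Preadditive.leftComp]

end Preadditive

def IsSumCompact {C : Type u} [Category.{v} C] [Preadditive C] (X : C) : Prop :=
  ∀ ⦃J : Type v⦄ [DecidableEq J] ⦃Y : J → C⦄ ⦃P : C⦄ (ι : ∀ j, Y j ⟶ P),
    IsColimit (Cofan.mk P ι) → Function.Bijective (homSumMap X ι)

def isColimitDirectSumCofan {J : Type v} [DecidableEq J] (G : J → AddCommGrpCat.{v}) :
    IsColimit (Cofan.mk (AddCommGrpCat.of (⨁ j, G j))
      fun j => AddCommGrpCat.ofHom (of (fun j => G j) j)) :=
  Cofan.IsColimit.mk _ (fun s => AddCommGrpCat.ofHom (toAddMonoid fun j => (s.inj j).hom))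
    (fun s j => by ext x; simp)
    (fun s m hm => by
      ext1
      refine DirectSum.addHom_ext fun j x => ?_
      simp [← hm j])

theorem IsCompactObj.isSumCompact {C : Type u} [Category.{v} C] [Preadditive C] {X : C}
    (hX : IsCompactObj X) : IsSumCompact X := by
  intro J _ Y P ι hι
  have := hX J
  let F := preadditiveCoyoneda.obj (Opposite.op X)
  exact ((isColimitDirectSumCofan fun j => F.obj (Y j)).coconePointUniqueUpToIso
    (isColimitCofanMkObjOfIsColimit F Y ι hι)).addCommGroupIsoToAddEquiv.bijective

section Shift

variable {C : Type u} [Category.{v} C] [Preadditive C] [HasShift C ℤ]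
  [∀ n : ℤ, (shiftFunctor C n).Additive]

theorem IsSumCompact.shift {X : C} (hX : IsSumCompact X) (k : ℤ) : IsSumCompact (X⟦k⟧) := by
  intro J _ Y P ι hι
  have : (shiftEquiv C k).functor.Additive := inferInstanceAs (shiftFunctor C k).Additive
  let e : ∀ W : C, (X⟦k⟧ ⟶ W) ≃+ (X ⟶ W⟦-k⟧) := (shiftEquiv C k).toAdjunction.homAddEquiv X
  have key : (e P).toAddMonoidHom.comp (homSumMap (X⟦k⟧) ι) =
      (homSumMap X fun j => (ι j)⟦-k⟧').comp (DirectSum.map fun j => (e (Y j)).toAddMonoidHom) := by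
    refine DirectSum.addHom_ext fun j a => ?_
    rw [AddMonoidHom.comp_apply, AddMonoidHom.comp_apply, map_of, homSumMap_of, homSumMap_of]
    exact Adjunction.homEquiv_naturality_right _ _ _
  have hmap : Function.Bijective (DirectSum.map fun j => (e (Y j)).toAddMonoidHom) :=
    ⟨(map_injective _).2 fun j => (e (Y j)).injective,
      (map_surjective _).2 fun j => (e (Y j)).surjective⟩
  have hcomp : Function.Bijective ((homSumMap X fun j => (ι j)⟦-k⟧').comp
      (DirectSum.map fun j => (e (Y j)).toAddMonoidHom)) :=
    (hX _ (isColimitCofanMkObjOfIsColimit (shiftFunctor C (-k)) Y ι hι)).comp hmap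
  rw [← key] at hcomp
  exact (Function.Bijective.of_comp_iff' (e P).bijective _).1 hcomp

section Pretriangulated

variable [HasZeroObject C] [Pretriangulated C]

theorem exact_leftComp_of_distTriang {T : Triangle C} (hT : T ∈ distTriang C) (W : C) :
    Function.Exact (Preadditive.leftComp W T.mor₂) (Preadditive.leftComp W T.mor₁) := by
  intro b
  constructor
  · intro hb
    obtain ⟨c, rfl⟩ := Triangle.yoneda_exact₂ T hT b hb
    exact ⟨c, rfl⟩
  · rintro ⟨c, rfl⟩
    simp [Preadditive.leftComp, comp_distTriang_mor_zero₁₂_assoc _ hT]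

theorem IsSumCompact.of_distTriang {A B Z : C} {f : A ⟶ B} {g : B ⟶ Z} {h : Z ⟶ A⟦(1 : ℤ)⟧}
    (hT : Triangle.mk f g h ∈ distTriang C) (hA : IsSumCompact A) (hZ : IsSumCompact Z) :
    IsSumCompact B := by
  intro J _ Y P ι hι
  have hT₁ := rot_of_distTriang _ hT
  have hT₃ := inv_rot_of_distTriang _ hT
  -- rows `Hom(A⟦1⟧, -) → Hom(Z, -) → Hom(B, -) → Hom(A, -) → Hom(Z⟦-1⟧, -)`, applied to the `Y j`
  -- (summed) and to `P`; exactness comes from the rotated, given and inverse-rotated triangles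
  exact AddMonoidHom.bijective_of_surjective_of_bijective_of_bijective_of_injective
    _ _ _ _ _ _ _ _ _ _ _ _ _
    (homSumMap_naturality _ ι) (homSumMap_naturality _ ι) (homSumMap_naturality _ ι)
    (homSumMap_naturality _ ι)
    (exact_map fun j => exact_leftComp_of_distTriang hT₁ (Y j))
    (exact_map fun j => exact_leftComp_of_distTriang hT (Y j))
    (exact_map fun j => exact_leftComp_of_distTriang hT₃ (Y j))
    (exact_leftComp_of_distTriang hT₁ P) (exact_leftComp_of_distTriang hT P)
    (exact_leftComp_of_distTriang hT₃ P)
    (hA.shift 1 ι hι).2 (hZ ι hι) (hA ι hι) (hZ.shift (-1) ι hι).1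

def HasThickCone (P : Set C) {X' X : C} (x : X' ⟶ X) : Prop :=
  ∃ (Z : C) (w : X ⟶ Z) (z : Z ⟶ X'⟦(1 : ℤ)⟧), Triangle.mk x w z ∈ distTriang C ∧ ThickClosure P Z

open ZeroObject in
theorem hasThickCone_id (P : Set C) (X : C) : HasThickCone P (𝟙 X) :=
  ⟨0, 0, 0, contractible_distinguished X, ThickClosure.zero (isZero_zero C)⟩

theorem exists_hasThickCone_comp_eq_zero (P : Set C) {X Z : C} (a : X ⟶ Z) (hX : IsSumCompact X)
    (hZ : IsSumCompact Z) (hZP : ThickClosure P Z) :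
    ∃ (X' : C) (x : X' ⟶ X), x ≫ a = 0 ∧ HasThickCone P x ∧ IsSumCompact X' := by
  obtain ⟨X', x, z, hT⟩ := distinguished_cocone_triangle₁ a
  exact ⟨X', x, comp_distTriang_mor_zero₁₂ _ hT, ⟨Z, a, z, hT, hZP⟩,
    (hZ.shift (-1)).of_distTriang (inv_rot_of_distTriang _ hT) hX⟩

end Pretriangulated

end Shift

section Triangulated

variable {C : Type u} [Category.{v} C] [Preadditive C] [HasZeroObject C] [HasShift C ℤ]
  [∀ n : ℤ, (shiftFunctor C n).Additive] [Pretriangulated C] [IsTriangulated C]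

theorem HasThickCone.comp {P : Set C} {X₂ X₁ X : C} {x₂ : X₂ ⟶ X₁} {x₁ : X₁ ⟶ X}
    (h₂ : HasThickCone P x₂) (h₁ : HasThickCone P x₁) : HasThickCone P (x₂ ≫ x₁) := by
  obtain ⟨Z₂, w₂, z₂, hT₂, hZ₂⟩ := h₂
  obtain ⟨Z₁, w₁, z₁, hT₁, hZ₁⟩ := h₁
  obtain ⟨Z, w, z, hT⟩ := distinguished_cocone_triangle (x₂ ≫ x₁)
  exact ⟨Z, w, z, hT, .ext₂ _ _ _ (Triangulated.someOctahedron rfl hT₂ hT₁ hT).mem hZ₂ hZ₁⟩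

theorem exists_hasThickCone_forall_comp_eq_zero (P : Set C) {J : Type*} {Z : J → C}
    (hZ : ∀ j, IsSumCompact (Z j)) (hZP : ∀ j, ThickClosure P (Z j)) (s : Finset J) {X : C}
    (hX : IsSumCompact X) (p : ∀ j, X ⟶ Z j) :
    ∃ (X' : C) (x : X' ⟶ X), (∀ j ∈ s, x ≫ p j = 0) ∧ HasThickCone P x ∧ IsSumCompact X' := by
  classical
  induction s using Finset.induction_on generalizing X with
  | empty => exact ⟨X, 𝟙 X, by simp, hasThickCone_id P X, hX⟩
  | insert j s _ ih =>
    obtain ⟨X₁, x₁, hx₁, hc₁, hX₁⟩ := ih hX p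
    obtain ⟨X₂, x₂, hx₂, hc₂, hX₂⟩ :=
      exists_hasThickCone_comp_eq_zero P (x₁ ≫ p j) hX₁ (hZ j) (hZP j)
    refine ⟨X₂, x₂ ≫ x₁, fun i hi => ?_, hc₂.comp hc₁, hX₂⟩
    rcases Finset.mem_insert.1 hi with rfl | hi
    · rw [Category.assoc, hx₂]
    · rw [Category.assoc, hx₁ i hi, comp_zero]

def LiftsUpToThick (P : Set C) {Y Y' : C} (y : Y ⟶ Y') : Prop :=
  ∀ ⦃X : C⦄ (f : X ⟶ Y'), IsSumCompact X →
    ∃ (X' : C) (x : X' ⟶ X) (g : X' ⟶ Y), x ≫ f = g ≫ y ∧ HasThickCone P x ∧ IsSumCompact X'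

theorem LiftsUpToThick.comp {P : Set C} {Y Y'' Y' : C} {c : Y ⟶ Y''} {d : Y'' ⟶ Y'}
    (hc : LiftsUpToThick P c) (hd : LiftsUpToThick P d) : LiftsUpToThick P (c ≫ d) := by
  intro X f hX
  obtain ⟨X₁, x₁, g₁, fac₁, hx₁, hX₁⟩ := hd f hX
  obtain ⟨X₂, x₂, g₂, fac₂, hx₂, hX₂⟩ := hc g₁ hX₁
  exact ⟨X₂, x₂ ≫ x₁, g₂, by rw [Category.assoc, fac₁, reassoc_of% fac₂], hx₂.comp hx₁, hX₂⟩

theorem liftsUpToThick_of_distTriang_of_iso_sigma (P : Set C) {Y Y' N : C} {y : Y ⟶ Y'}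
    {u : Y' ⟶ N} {v : N ⟶ Y⟦(1 : ℤ)⟧} (hT : Triangle.mk y u v ∈ distTriang C) {J : Type v}
    {Z : J → C} [HasCoproduct Z] (e : N ≅ ∐ Z) (hZ : ∀ j, IsSumCompact (Z j))
    (hZP : ∀ j, ThickClosure P (Z j)) : LiftsUpToThick P y := by
  classical
  intro X f hX
  obtain ⟨p, hp⟩ := (hX (Sigma.ι Z) (coproductIsCoproduct Z)).2 (f ≫ u ≫ e.hom)
  obtain ⟨X', x, hx, hxc, hX'⟩ :=
    exists_hasThickCone_forall_comp_eq_zero P hZ hZP p.support hX fun j => p j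
  have hpx : DirectSum.map (fun j => Preadditive.leftComp (Z j) x) p = 0 := by
    ext j
    by_cases hj : j ∈ p.support
    · simpa [Preadditive.leftComp] using hx j hj
    · simp [DFinsupp.notMem_support_iff.1 hj]
  have hxfu : (x ≫ f) ≫ u = 0 := by
    have := congr($(homSumMap_naturality x (Sigma.ι Z)) p)
    rw [AddMonoidHom.comp_apply, AddMonoidHom.comp_apply, hp, hpx, map_zero] at this
    simpa [Preadditive.leftComp] using congr($this ≫ e.inv)
  obtain ⟨g, hg⟩ := Triangle.coyoneda_exact₂ _ hT (x ≫ f) hxfu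
  exact ⟨X', x, g, hg, hxc, hX'⟩

theorem exists_factorization_of_distTriang {Y Y' N₀ N N₁ : C} {y : Y ⟶ Y'} {u : Y' ⟶ N}
    {v : N ⟶ Y⟦(1 : ℤ)⟧} (hT : Triangle.mk y u v ∈ distTriang C) {p : N₀ ⟶ N} {q : N ⟶ N₁}
    {r : N₁ ⟶ N₀⟦(1 : ℤ)⟧} (hN : Triangle.mk p q r ∈ distTriang C) :
    ∃ (Y'' : C) (c : Y ⟶ Y'') (d : Y'' ⟶ Y') (u₀ : Y'' ⟶ N₀) (v₀ : N₀ ⟶ Y⟦(1 : ℤ)⟧)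
      (u₁ : Y' ⟶ N₁) (v₁ : N₁ ⟶ Y''⟦(1 : ℤ)⟧),
      c ≫ d = y ∧ Triangle.mk c u₀ v₀ ∈ distTriang C ∧ Triangle.mk d u₁ v₁ ∈ distTriang C := by
  obtain ⟨Y'', d, v₁, hd⟩ := distinguished_cocone_triangle₁ (u ≫ q)
  let O := Triangulated.someOctahedron' rfl hT hN hd
  exact ⟨Y'', O.m₁, d, O.m₃, p ≫ v, u ≫ q, v₁, O.comm₁, O.mem, hd⟩

theorem EClass.liftsUpToThick {P : Set C} (hP : ∀ Z ∈ P, IsSumCompact Z) {n : ℕ} {N : C}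
    (hN : EClass P n N) {Y Y' : C} {y : Y ⟶ Y'} {u : Y' ⟶ N} {v : N ⟶ Y⟦(1 : ℤ)⟧}
    (hT : Triangle.mk y u v ∈ distTriang C) : LiftsUpToThick P y := by
  induction hN generalizing Y Y' with
  | coprod Z hZ e =>
    exact liftsUpToThick_of_distTriang_of_iso_sigma P hT e (fun j => hP _ (hZ j))
      fun j => .of (hZ j)
  | ext _ _ _ _ _ hN _ _ ih₀ ih₁ =>
    obtain ⟨Y'', c, d, u₀, v₀, u₁, v₁, rfl, hc, hd⟩ := exists_factorization_of_distTriang hT hN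
    exact (ih₀ hc).comp (ih₁ hd)

end Triangulated

theorem factorization_through_thick_closure_general
    (P : Set T) (hP : ∀ Z ∈ P, IsCompactObj Z)
    (X Y Y' : T) (hX : IsCompactObj X) (f : X ⟶ Y') (y : Y ⟶ Y')
    (n : ℕ)
    (N : T) (u : Y' ⟶ N) (v : N ⟶ Y⟦(1 : ℤ)⟧)
    (hNtri : Triangle.mk y u v ∈ distTriang T) (hN : EClass P n N) :
    ∃ (X' : T) (x : X' ⟶ X) (g : X' ⟶ Y) (C : T) (w : X ⟶ C) (z : C ⟶ X'⟦(1 : ℤ)⟧),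
      x ≫ f = g ≫ y ∧ (Triangle.mk x w z ∈ distTriang T) ∧ ThickClosure P C := by
  obtain ⟨X', x, g, hfac, ⟨C, w, z, hT, hC⟩, -⟩ :=
    hN.liftsUpToThick (fun Z hZ => (hP Z hZ).isSumCompact) hNtri f hX.isSumCompact
  exact ⟨X', x, g, C, w, z, hfac, hT, hC⟩

/-- STATEMENT 6. -/
theorem factorization_through_thick_closure [HasCoproducts.{v} T]
    (P : Set T) (hP : ∀ Z ∈ P, IsCompactObj Z)
    (X Y Y' : T) (hX : IsCompactObj X) (f : X ⟶ Y') (y : Y ⟶ Y')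
    (n : ℕ) (hn : 1 ≤ n)
    (N : T) (u : Y' ⟶ N) (v : N ⟶ Y⟦(1 : ℤ)⟧)
    (hNtri : Triangle.mk y u v ∈ distTriang T) (hN : EClass P n N) :
    ∃ (X' : T) (x : X' ⟶ X) (g : X' ⟶ Y) (C : T) (w : X ⟶ C) (z : C ⟶ X'⟦(1 : ℤ)⟧),
      x ≫ f = g ≫ y ∧ (Triangle.mk x w z ∈ distTriang T) ∧ ThickClosure P C :=
  factorization_through_thick_closure_general P hP X Y Y' hX f y n N u v hNtri hN
end

section
/- Let k be a field and A a finite field extension of k. Then the ring A ⊗_k A is self-injective: A ⊗_k A is injective as a module over itself. -/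
/-!
Let `λ` be a linear form on a finite-dimensional commutative `k`-algebra `B` such that
`c ↦ λ(c * ·)` is injective, hence bijective onto `Hom_k(B, k)`. For Baer's criterion, extend
`λ ∘ g` from an ideal `I` to a form on `B`; it is `λ(c * ·)` for some `c`, and nondegeneracy
forces `g = (c * ·)` on `I`. On a field every nonzero form is such a `λ`, and `λ ⊗ λ` is one on
`A ⊗_k A`, since `(A ⊗ A)^* ≅ A^* ⊗ A^*` and tensoring over a field preserves injectivity.
-/

open TensorProduct

namespace Module

variable {k B : Type*} [Field k] [CommRing B] [Algebra k B]

/-- `B` is a Frobenius algebra with Frobenius form `lam` exactly when this map is injective. -/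
def frobeniusPairing (lam : Dual k B) : B →ₗ[k] Dual k B :=
  (LinearMap.mul k B).compr₂ lam

@[simp]
theorem frobeniusPairing_apply (lam : Dual k B) (c b : B) :
    frobeniusPairing lam c b = lam (c * b) := rfl

theorem injective_frobeniusPairing_of_ne_zero {A : Type*} [Field A] [Algebra k A]
    {lam : Dual k A} (hlam : lam ≠ 0) : Function.Injective (frobeniusPairing lam) := by
  refine (injective_iff_map_eq_zero _).2 fun c hc => ?_
  by_contra hc0
  refine hlam (LinearMap.ext fun x => ?_)
  simpa [← mul_assoc, mul_inv_cancel₀ hc0] using LinearMap.congr_fun hc (c⁻¹ * x)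

theorem frobeniusPairing_lid_comp_map {C : Type*} [CommRing C] [Algebra k C]
    (lam : Dual k B) (nu : Dual k C) :
    frobeniusPairing (TensorProduct.lid k k ∘ₗ TensorProduct.map lam nu) =
      TensorProduct.dualDistrib k B C ∘ₗ
        TensorProduct.map (frobeniusPairing lam) (frobeniusPairing nu) := by
  ext c c' b b'
  simp

theorem injective_frobeniusPairing_lid_comp_map {C : Type*} [CommRing C] [Algebra k C]
    [FiniteDimensional k B] [FiniteDimensional k C] {lam : Dual k B} {nu : Dual k C}
    (hlam : Function.Injective (frobeniusPairing lam))
    (hnu : Function.Injective (frobeniusPairing nu)) :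
    Function.Injective (frobeniusPairing (TensorProduct.lid k k ∘ₗ TensorProduct.map lam nu)) := by
  rw [frobeniusPairing_lid_comp_map, ← LinearMap.lTensor_comp_rTensor]
  exact (TensorProduct.dualDistribEquiv k B C).injective.comp
    ((Flat.lTensor_preserves_injective_linearMap _ hnu).comp
      (Flat.rTensor_preserves_injective_linearMap _ hlam))

theorem injective_self_of_injective_frobeniusPairing [FiniteDimensional k B] {lam : Dual k B}
    (hlam : Function.Injective (frobeniusPairing lam)) : Module.Injective B B := by
  have hsurj : Function.Surjective (frobeniusPairing lam) :=
    (LinearMap.injective_iff_surjective_of_finrank_eq_finrank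
      Subspace.dual_finrank_eq.symm).mp hlam
  refine Baer.injective fun I g => ?_
  obtain ⟨ψ, hψ⟩ := LinearMap.exists_extend (lam ∘ₗ g.restrictScalars k :
    I.restrictScalars k →ₗ[k] k)
  obtain ⟨c, rfl⟩ := hsurj ψ
  refine ⟨LinearMap.toSpanSingleton B B c, fun x hx => hlam ?_⟩
  ext b
  have hg : g ⟨b * x, I.mul_mem_left b hx⟩ = b * g ⟨x, hx⟩ := by
    simpa using g.map_smul b ⟨x, hx⟩
  calc lam (x * c * b) = lam (c * (b * x)) := by ring_nf
    _ = lam (g ⟨b * x, I.mul_mem_left b hx⟩) := LinearMap.congr_fun hψ ⟨b * x, _⟩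
    _ = lam (g ⟨x, hx⟩ * b) := by rw [hg, mul_comm]

end Module

theorem tensorProduct_self_injective
    (k A : Type*) [Field k] [Field A] [Algebra k A] [FiniteDimensional k A] :
    Module.Injective (A ⊗[k] A) (A ⊗[k] A) := by
  obtain ⟨mu, hmu⟩ := exists_ne (0 : Module.Dual k A)
  have hmu_inj := Module.injective_frobeniusPairing_of_ne_zero hmu
  exact Module.injective_self_of_injective_frobeniusPairing
    (Module.injective_frobeniusPairing_lid_comp_map hmu_inj hmu_inj)
end

section
/- Let k be a field and A a finite field extension of k which is not separable over k. Then A, regarded as a module over the enveloping algebra A ⊗_k A via the multiplication map (a ⊗ b) · c = acb = abc, is not a projective A ⊗_k A-module. -/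
/-!
If `A` were projective over `A ⊗[k] A`, the surjection `A ⊗[k] A → A`, `x ↦ x • 1`, would split.
The image `t` of `1` under a splitting is a separability idempotent: it is annihilated by the
diagonal ideal, generated by the `1 ⊗ s - s ⊗ 1`, and multiplies out to `1`. Such an element
makes `A` formally unramified over `k`, and for finite field extensions this means separable.
-/

open TensorProduct

section

open Algebra.TensorProduct

variable {R S : Type*} [CommRing R] [CommRing S] [Algebra R S] [Module (S ⊗[R] S) S]
  [Module.Projective (S ⊗[R] S) S]

theorem exists_annihilator_diagonal_of_projective
    (smul_eq_lmul' : ∀ (x : S ⊗[R] S) (s : S), x • s = lmul' R x * s) :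
    ∃ t : S ⊗[R] S, (∀ s, ((1 : S) ⊗ₜ[R] s - s ⊗ₜ[R] 1) * t = 0) ∧ lmul' R t = 1 := by
  let f := LinearMap.toSpanSingleton (S ⊗[R] S) S 1
  have hf : ∀ x, f x = lmul' R x := fun x => by simp [f, smul_eq_lmul']
  have hsurj : Function.Surjective f := fun s => ⟨s ⊗ₜ 1, by simp [hf]⟩
  obtain ⟨sec, hsec⟩ := Module.projective_lifting_property f LinearMap.id hsurj
  refine ⟨sec 1, fun s => ?_, ?_⟩
  · have hkill : ((1 : S) ⊗ₜ[R] s - s ⊗ₜ[R] 1) • (1 : S) = 0 := by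
      simp [smul_eq_lmul']
    rw [← smul_eq_mul, ← map_smul, hkill, map_zero]
  · rw [← hf, ← LinearMap.comp_apply, hsec, LinearMap.id_apply]

theorem Algebra.FormallyUnramified.of_projective [Algebra.EssFiniteType R S]
    (smul_eq_lmul' : ∀ (x : S ⊗[R] S) (s : S), x • s = lmul' R x * s) :
    Algebra.FormallyUnramified R S :=
  Algebra.FormallyUnramified.iff_exists_tensorProduct.mpr
    (exists_annihilator_diagonal_of_projective smul_eq_lmul')

end

theorem not_projective_of_not_separable
    (k A : Type*) [Field k] [Field A] [Algebra k A] [FiniteDimensional k A]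
    (h : ¬ Algebra.IsSeparable k A) :
    letI : Module (A ⊗[k] A) A :=
      Module.compHom A (Algebra.TensorProduct.lmul' k (S := A)).toRingHom
    ¬ Module.Projective (A ⊗[k] A) A := by
  let _ : Module (A ⊗[k] A) A :=
    Module.compHom A (Algebra.TensorProduct.lmul' k (S := A)).toRingHom
  intro
  have : Algebra.FormallyUnramified k A :=
    Algebra.FormallyUnramified.of_projective fun _ _ => rfl
  exact h ((Algebra.FormallyUnramified.iff_isSeparable k A).mp this)
end
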